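/- Let p be a prime not dividing any of a, b, c, and let S ⊆ ℕ × ℕ be the set of points (i,j) such that M[i,j] is not congruent to 0 modulo p. Then S is a discrete self-similar fractal in the usual sense: for all s, t with 0 ≤ s, t < p, all k ≥ 0, and all i, j < p^k, the point (s·p^k + i, t·p^k + j) belongs to S if and only if both (s,t) ∈ S and (i,j) ∈ S. -/
import Mathlib


/-- The matrix `M` from Definition 4.1: `M[0,0] = 1`, `M[0,j] = a^j` for `j > 0`,
`M[i,0] = c^i` for `i > 0`, and `M[i,j] = a*M[i,j-1] + b*M[i-1,j-1] + c*M[i-1,j]`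
for `i, j > 0`. -/
def M (a b c : ℕ) : ℕ → ℕ → ℕ
  | 0, 0 => 1
  | 0, j + 1 => a ^ (j + 1)
  | i + 1, 0 => c ^ (i + 1)
  | i + 1, j + 1 =>
      a * M a b c (i + 1) j + b * M a b c i j + c * M a b c i (j + 1)
  termination_by i j => i + j
lemma M_zero_left (a b c j : ℕ) : M a b c 0 j = a ^ j := by
  cases j with
  | zero => rw [M, pow_zero]
  | succ j => rw [M]

lemma M_zero_right (a b c i : ℕ) : M a b c i 0 = c ^ i := by
  cases i with
  | zero => rw [M, pow_zero]
  | succ i => rw [M]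

lemma M_succ_succ (a b c i j : ℕ) :
    M a b c (i + 1) (j + 1) =
      a * M a b c (i + 1) j + b * M a b c i j + c * M a b c i (j + 1) := by
  rw [M]

/-- the coefficient sum -/
def F (a b c i j : ℕ) : ℕ :=
  ∑ β ∈ Finset.range (j + 1),
    Nat.choose i β * Nat.choose (i + j - β) i * a ^ (j - β) * b ^ β * c ^ (i - β)

lemma F_zero_left (a b c j : ℕ) : F a b c 0 j = a ^ j := by
  unfold F
  rw [Finset.sum_eq_single 0]
  · simp
  · intro β hβ hne
    rcases β with _ | β
    · exact absurd rfl hne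
    · simp
  · simp

lemma F_zero_right (a b c i : ℕ) : F a b c i 0 = c ^ i := by
  unfold F
  simp [Nat.choose_self]

lemma F_identity (a b c i j : ℕ) :
    F a b c (i+1) (j+1) = a * F a b c (i+1) j + b * F a b c i j + c * F a b c i (j+1) := by
  have hsplit : F a b c (i+1) (j+1) =
      (∑ β ∈ Finset.range (j+2),
        Nat.choose (i+1) β * Nat.choose (i+j+1-β) (i+1) * a ^ (j+1-β) * b ^ β * c ^ (i+1-β))
    + (∑ β ∈ Finset.range (j+2),
        Nat.choose (i+1) β * Nat.choose (i+j+1-β) i * a ^ (j+1-β) * b ^ β * c ^ (i+1-β)) := by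
    unfold F
    rw [← Finset.sum_add_distrib]
    apply Finset.sum_congr rfl
    intro β hβ
    have hβ' : β ≤ j + 1 := by
      have := Finset.mem_range.mp hβ; omega
    have h1 : (i+1) + (j+1) - β = (i+j+1-β) + 1 := by omega
    rw [h1, Nat.choose_succ_succ']
    ring
  have hA : (∑ β ∈ Finset.range (j+2),
        Nat.choose (i+1) β * Nat.choose (i+j+1-β) (i+1) * a ^ (j+1-β) * b ^ β * c ^ (i+1-β))
      = a * F a b c (i+1) j := by
    rw [Finset.sum_range_succ]
    have hz : Nat.choose (i+j+1-(j+1)) (i+1) = 0 := by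
      have h : i+j+1-(j+1) = i := by omega
      rw [h]; exact Nat.choose_succ_self i
    rw [hz, mul_zero, zero_mul, zero_mul, zero_mul, add_zero]
    unfold F
    rw [Finset.mul_sum]
    apply Finset.sum_congr rfl
    intro β hβ
    have hβ' : β ≤ j := by
      have := Finset.mem_range.mp hβ; omega
    have h1 : i+j+1-β = (i+1)+j-β := by omega
    have h2 : j+1-β = (j-β)+1 := by omega
    rw [h1, h2, pow_succ]
    ring
  have hB : (∑ β ∈ Finset.range (j+2),
        Nat.choose (i+1) β * Nat.choose (i+j+1-β) i * a ^ (j+1-β) * b ^ β * c ^ (i+1-β))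
      = b * F a b c i j + c * F a b c i (j+1) := by
    rw [Finset.sum_range_succ']
    have hshift : ∀ β ∈ Finset.range (j+1),
        Nat.choose (i+1) (β+1) * Nat.choose (i+j+1-(β+1)) i * a ^ (j+1-(β+1)) * b ^ (β+1)
          * c ^ (i+1-(β+1))
        = Nat.choose i β * Nat.choose (i+j-β) i * a ^ (j-β) * b ^ (β+1) * c ^ (i-β)
        + Nat.choose i (β+1) * Nat.choose (i+j-β) i * a ^ (j-β) * b ^ (β+1) * c ^ (i-β) := by
      intro β hβ
      have h1 : i+j+1-(β+1) = i+j-β := by omega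
      have h2 : j+1-(β+1) = j-β := by omega
      have h3 : i+1-(β+1) = i-β := by omega
      rw [h1, h2, h3, Nat.choose_succ_succ']
      ring
    rw [Finset.sum_congr rfl hshift, Finset.sum_add_distrib]
    have hb1 : (∑ β ∈ Finset.range (j+1),
        Nat.choose i β * Nat.choose (i+j-β) i * a ^ (j-β) * b ^ (β+1) * c ^ (i-β))
        = b * F a b c i j := by
      unfold F
      rw [Finset.mul_sum]
      apply Finset.sum_congr rfl
      intro β hβ
      rw [pow_succ]
      ring
    have hc1 : (∑ β ∈ Finset.range (j+1),
        Nat.choose i (β+1) * Nat.choose (i+j-β) i * a ^ (j-β) * b ^ (β+1) * c ^ (i-β))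
        + Nat.choose (i+1) 0 * Nat.choose (i+j+1-0) i * a ^ (j+1-0) * b ^ 0 * c ^ (i+1-0)
        = c * F a b c i (j+1) := by
      unfold F
      conv_rhs => rw [Finset.mul_sum, Finset.sum_range_succ']
      have h0 : c * (Nat.choose i 0 * Nat.choose (i+(j+1)-0) i * a ^ (j+1-0) * b ^ 0
          * c ^ (i-0)) = Nat.choose (i+1) 0 * Nat.choose (i+j+1-0) i * a ^ (j+1-0) * b ^ 0
          * c ^ (i+1-0) := by
        simp only [Nat.choose_zero_right, Nat.sub_zero, pow_zero]
        have : i + (j+1) = i+j+1 := by omega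
        rw [this, pow_succ]
        ring
      rw [← h0]
      congr 1
      apply Finset.sum_congr rfl
      intro β hβ
      have h1 : i+(j+1)-(β+1) = i+j-β := by omega
      have h2 : j+1-(β+1) = j-β := by omega
      rw [h1, h2]
      by_cases hcase : β + 1 ≤ i
      · have h3 : i-β = (i-(β+1))+1 := by omega
        rw [h3, pow_succ]
        ring
      · have h4 : Nat.choose i (β+1) = 0 := Nat.choose_eq_zero_of_lt (by omega)
        rw [h4]
        ring
    omega
  rw [hsplit, hA, hB]
  ring

lemma M_eq_F (a b c : ℕ) : ∀ i j, M a b c i j = F a b c i j := by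
  have H : ∀ n i j, i + j ≤ n → M a b c i j = F a b c i j := by
    intro n
    induction n with
    | zero =>
      intro i j h
      obtain ⟨rfl, rfl⟩ : i = 0 ∧ j = 0 := by omega
      rw [M_zero_left, F_zero_left]
    | succ n ih =>
      intro i j h
      match i, j with
      | 0, j => rw [M_zero_left, F_zero_left]
      | i+1, 0 => rw [M_zero_right, F_zero_right]
      | i+1, j+1 =>
        rw [M_succ_succ, ih (i+1) j (by omega), ih i j (by omega), ih i (j+1) (by omega),
            ← F_identity]
  intro i j; exact H (i+j) i j le_rfl

lemma choose_dvd_aux {p : ℕ} (hp : p.Prime) {m k : ℕ} (hm : 1 ≤ m) (hmk : m ≤ k)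
    (hk : k ≤ p - 1) : p ∣ Nat.choose (p - 1 + m) k := by
  have h2 : 2 ≤ p := hp.two_le
  have hkn : k ≤ p - 1 + m := by omega
  have hfact := Nat.choose_mul_factorial_mul_factorial hkn
  have hd : p ∣ Nat.factorial (p - 1 + m) := (Nat.Prime.dvd_factorial hp).mpr (by omega)
  rw [← hfact] at hd
  rcases (Nat.Prime.dvd_mul hp).mp hd with h | h
  · rcases (Nat.Prime.dvd_mul hp).mp h with h' | h'
    · exact h'
    · have := (Nat.Prime.dvd_factorial hp).mp h'
      omega
  · have := (Nat.Prime.dvd_factorial hp).mp h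
    omega

lemma choose_p_sub_one {p : ℕ} (hp : p.Prime) :
    ∀ β, β ≤ p - 1 → ((Nat.choose (p - 1) β : ZMod p) = (-1) ^ β) := by
  have h2 : 2 ≤ p := hp.two_le
  intro β
  induction β with
  | zero => intro _; simp
  | succ β ih =>
    intro h
    have hstep : Nat.choose (p-1) β + Nat.choose (p-1) (β+1) = Nat.choose p (β+1) := by
      have h' := (Nat.choose_succ_succ' (p-1) β).symm
      rwa [show p - 1 + 1 = p from by omega] at h'
    have hdvd : p ∣ Nat.choose p (β+1) := Nat.Prime.dvd_choose_self hp (by omega) (by omega)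
    have hz : ((Nat.choose (p-1) β : ZMod p) + (Nat.choose (p-1) (β+1) : ZMod p)) = 0 := by
      rw [← Nat.cast_add, hstep]
      exact (ZMod.natCast_eq_zero_iff _ _).mpr hdvd
    rw [ih (by omega)] at hz
    have : ((p-1).choose (β+1) : ZMod p) = -(-1 : ZMod p)^β := by linear_combination hz
    rw [this, pow_succ]
    ring

lemma M_row {p : ℕ} (hp : p.Prime) (a b c : ℕ) :
    ∀ j ≤ p - 1, ((M a b c (p-1) j : ZMod p)) = (-(b:ZMod p))^j * (c:ZMod p)^(p-1-j) := by
  have h2 : 2 ≤ p := hp.two_le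
  intro j hj
  rw [M_eq_F]
  unfold F
  push_cast
  rw [Finset.sum_eq_single j]
  · have e1 : p - 1 + j - j = p - 1 := by omega
    rw [e1, Nat.choose_self, Nat.sub_self, choose_p_sub_one hp j hj]
    push_cast
    rw [neg_pow]
    ring
  · intro β hβ hne
    have hβ' : β < j := by
      have := Finset.mem_range.mp hβ; omega
    have e2 : p - 1 + j - β = p - 1 + (j - β) := by omega
    have hdvd : p ∣ Nat.choose (p - 1 + j - β) (p - 1) := by
      rw [e2]
      exact choose_dvd_aux hp (by omega) (by omega) le_rfl
    have hz : ((Nat.choose (p - 1 + j - β) (p-1) : ZMod p)) = 0 :=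
      (ZMod.natCast_eq_zero_iff _ _).mpr hdvd
    rw [hz]
    ring
  · intro hj'
    exact absurd (Finset.mem_range.mpr (by omega)) hj'

lemma M_col {p : ℕ} (hp : p.Prime) (a b c : ℕ) :
    ∀ i ≤ p - 1, ((M a b c i (p-1) : ZMod p)) = (-(b:ZMod p))^i * (a:ZMod p)^(p-1-i) := by
  have h2 : 2 ≤ p := hp.two_le
  intro i hi
  rw [M_eq_F]
  unfold F
  push_cast
  rw [Finset.sum_eq_single i]
  · have e1 : i + (p - 1) - i = p - 1 := by omega
    rw [e1, Nat.choose_self, Nat.sub_self, choose_p_sub_one hp i hi]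
    push_cast
    rw [neg_pow]
    ring
  · intro β hβ hne
    rcases lt_or_gt_of_ne hne with hlt | hgt
    · have e2 : i + (p - 1) - β = p - 1 + (i - β) := by omega
      have hdvd : p ∣ Nat.choose (i + (p-1) - β) i := by
        rw [e2]
        exact choose_dvd_aux hp (by omega) (by omega) hi
      have hz : ((Nat.choose (i + (p-1) - β) i : ZMod p)) = 0 :=
        (ZMod.natCast_eq_zero_iff _ _).mpr hdvd
      rw [hz]
      ring
    · rw [Nat.choose_eq_zero_of_lt hgt]
      push_cast
      ring
  · intro hi'
    exact absurd (Finset.mem_range.mpr (by omega)) hi'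

lemma M_key {p : ℕ} (hp : p.Prime) (a b c : ℕ) (hb : ¬ p ∣ b) :
    ∀ n S T u v, S * p + u + (T * p + v) ≤ n → u < p → v < p →
      ((M a b c (S*p+u) (T*p+v) : ZMod p))
        = (M a b c S T : ZMod p) * (M a b c u v : ZMod p) := by
  haveI : Fact p.Prime := ⟨hp⟩
  have h2 : 2 ≤ p := hp.two_le
  have hbz : (b : ZMod p) ≠ 0 := fun h => hb ((ZMod.natCast_eq_zero_iff _ _).mp h)
  intro n
  induction n with
  | zero =>
    intro S T u v h hu hv
    have hS : S = 0 := by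
      rcases Nat.mul_eq_zero.mp (show S * p = 0 by omega) with h' | h'
      · exact h'
      · omega
    have hT : T = 0 := by
      rcases Nat.mul_eq_zero.mp (show T * p = 0 by omega) with h' | h'
      · exact h'
      · omega
    subst hS; subst hT
    have hu0 : u = 0 := by omega
    have hv0 : v = 0 := by omega
    subst hu0; subst hv0
    simp only [Nat.zero_mul, Nat.zero_add, Nat.add_zero,
      show M a b c 0 0 = 1 from by rw [M]]
    norm_num
  | succ n ih =>
    intro S T u v h hu hv
    match u, v with
    | u'+1, v'+1 =>
      have e1 : S*p+(u'+1) = (S*p+u')+1 := by omega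
      have e2 : T*p+(v'+1) = (T*p+v')+1 := by omega
      rw [e1, e2, M_succ_succ, M_succ_succ a b c u' v']
      push_cast
      rw [show (S*p+u')+1 = S*p+(u'+1) from by omega,
          show (T*p+v')+1 = T*p+(v'+1) from by omega,
          ih S T (u'+1) v' (by omega) (by omega) (by omega),
          ih S T u' v' (by omega) (by omega) (by omega),
          ih S T u' (v'+1) (by omega) (by omega) (by omega)]
      ring
    | 0, v'+1 =>
      match S with
      | 0 =>
        simp only [Nat.zero_mul, Nat.zero_add, Nat.add_zero]
        rw [M_zero_left, M_zero_left, M_zero_left]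
        push_cast
        rw [pow_add, pow_mul, ZMod.pow_card]
      | S'+1 =>
        have emul : (S'+1)*p = S'*p + p := Nat.succ_mul S' p
        have e1 : (S'+1)*p + 0 = (S'*p + (p-1)) + 1 := by omega
        have e2 : T*p+(v'+1) = (T*p+v')+1 := by omega
        rw [e1, e2, M_succ_succ]
        have i1 : ((M a b c ((S'*p+(p-1))+1) (T*p+v') : ZMod p))
            = (M a b c (S'+1) T : ZMod p) * (M a b c 0 v' : ZMod p) := by
          rw [← e1]
          exact ih (S'+1) T 0 v' (by omega) (by omega) (by omega)
        have i2 : ((M a b c (S'*p+(p-1)) (T*p+v') : ZMod p))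
            = (M a b c S' T : ZMod p) * (M a b c (p-1) v' : ZMod p) :=
          ih S' T (p-1) v' (by omega) (by omega) (by omega)
        have i3 : ((M a b c (S'*p+(p-1)) ((T*p+v')+1) : ZMod p))
            = (M a b c S' T : ZMod p) * (M a b c (p-1) (v'+1) : ZMod p) := by
          rw [← e2]
          exact ih S' T (p-1) (v'+1) (by omega) (by omega) (by omega)
        push_cast
        rw [i1, i2, i3, M_row hp a b c v' (by omega), M_row hp a b c (v'+1) (by omega),
            M_zero_left, M_zero_left]
        push_cast
        rw [show p-1-v' = (p-1-(v'+1))+1 from by omega]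
        rw [pow_succ, pow_succ]
        ring
    | u'+1, 0 =>
      match T with
      | 0 =>
        simp only [Nat.zero_mul, Nat.zero_add, Nat.add_zero]
        rw [M_zero_right, M_zero_right, M_zero_right]
        push_cast
        rw [pow_add, pow_mul, ZMod.pow_card]
      | T'+1 =>
        have emul : (T'+1)*p = T'*p + p := Nat.succ_mul T' p
        have e1 : S*p+(u'+1) = (S*p+u')+1 := by omega
        have e2 : (T'+1)*p + 0 = (T'*p + (p-1)) + 1 := by omega
        rw [e1, e2, M_succ_succ]
        have i1 : ((M a b c ((S*p+u')+1) (T'*p+(p-1)) : ZMod p))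
            = (M a b c S T' : ZMod p) * (M a b c (u'+1) (p-1) : ZMod p) := by
          rw [← e1]
          exact ih S T' (u'+1) (p-1) (by omega) (by omega) (by omega)
        have i2 : ((M a b c (S*p+u') (T'*p+(p-1)) : ZMod p))
            = (M a b c S T' : ZMod p) * (M a b c u' (p-1) : ZMod p) :=
          ih S T' u' (p-1) (by omega) (by omega) (by omega)
        have i3 : ((M a b c (S*p+u') ((T'*p+(p-1))+1) : ZMod p))
            = (M a b c S (T'+1) : ZMod p) * (M a b c u' 0 : ZMod p) := by
          rw [← e2]
          exact ih S (T'+1) u' 0 (by omega) (by omega) (by omega)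
        push_cast
        rw [i1, i2, i3, M_col hp a b c u' (by omega), M_col hp a b c (u'+1) (by omega),
            M_zero_right, M_zero_right]
        push_cast
        rw [show p-1-u' = (p-1-(u'+1))+1 from by omega]
        rw [pow_succ, pow_succ]
        ring
    | 0, 0 =>
      match S, T with
      | 0, T =>
        simp only [Nat.zero_mul, Nat.zero_add, Nat.add_zero]
        rw [M_zero_left, M_zero_left, show M a b c 0 0 = 1 from by rw [M]]
        push_cast
        rw [pow_mul, ZMod.pow_card]
        ring
      | S'+1, 0 =>
        simp only [Nat.zero_mul, Nat.zero_add, Nat.add_zero]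
        rw [M_zero_right, M_zero_right, show M a b c 0 0 = 1 from by rw [M]]
        push_cast
        rw [pow_mul, ZMod.pow_card]
        ring
      | S'+1, T'+1 =>
        have emulS : (S'+1)*p = S'*p + p := Nat.succ_mul S' p
        have emulT : (T'+1)*p = T'*p + p := Nat.succ_mul T' p
        have e1 : (S'+1)*p + 0 = (S'*p + (p-1)) + 1 := by omega
        have e2 : (T'+1)*p + 0 = (T'*p + (p-1)) + 1 := by omega
        rw [e1, e2, M_succ_succ]
        have i1 : ((M a b c ((S'*p+(p-1))+1) (T'*p+(p-1)) : ZMod p))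
            = (M a b c (S'+1) T' : ZMod p) * (M a b c 0 (p-1) : ZMod p) := by
          rw [← e1]
          exact ih (S'+1) T' 0 (p-1) (by omega) (by omega) (by omega)
        have i2 : ((M a b c (S'*p+(p-1)) (T'*p+(p-1)) : ZMod p))
            = (M a b c S' T' : ZMod p) * (M a b c (p-1) (p-1) : ZMod p) :=
          ih S' T' (p-1) (p-1) (by omega) (by omega) (by omega)
        have i3 : ((M a b c (S'*p+(p-1)) ((T'*p+(p-1))+1) : ZMod p))
            = (M a b c S' (T'+1) : ZMod p) * (M a b c (p-1) 0 : ZMod p) := by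
          rw [← e2]
          exact ih S' (T'+1) (p-1) 0 (by omega) (by omega) (by omega)
        have hmm : ((M a b c (p-1) (p-1) : ZMod p)) = 1 := by
          rw [M_row hp a b c (p-1) le_rfl, Nat.sub_self, pow_zero, mul_one]
          exact ZMod.pow_card_sub_one_eq_one (neg_ne_zero.mpr hbz)
        push_cast
        rw [i1, i2, i3, hmm, M_zero_left, M_zero_right,
            M_succ_succ a b c S' T', show M a b c 0 0 = 1 from by rw [M]]
        push_cast
        have ha' : (a : ZMod p) * (a : ZMod p)^(p-1) = (a : ZMod p) := by
          rw [← pow_succ', show p-1+1 = p from by omega, ZMod.pow_card]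
        have hc' : (c : ZMod p) * (c : ZMod p)^(p-1) = (c : ZMod p) := by
          rw [← pow_succ', show p-1+1 = p from by omega, ZMod.pow_card]
        calc (a:ZMod p) * ((M a b c (S'+1) T' : ZMod p) * (a:ZMod p)^(p-1))
              + (b:ZMod p) * ((M a b c S' T' : ZMod p) * 1)
              + (c:ZMod p) * ((M a b c S' (T'+1) : ZMod p) * (c:ZMod p)^(p-1))
            = ((a:ZMod p) * (a:ZMod p)^(p-1)) * (M a b c (S'+1) T' : ZMod p)
              + (b:ZMod p) * (M a b c S' T' : ZMod p)
              + ((c:ZMod p) * (c:ZMod p)^(p-1)) * (M a b c S' (T'+1) : ZMod p) := by ring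
          _ = ((a:ZMod p) * (M a b c (S'+1) T' : ZMod p)
              + (b:ZMod p) * (M a b c S' T' : ZMod p)
              + (c:ZMod p) * (M a b c S' (T'+1) : ZMod p)) * 1 := by rw [ha', hc']; ring

lemma M_keyK {p : ℕ} (hp : p.Prime) (a b c : ℕ) (hb : ¬ p ∣ b) :
    ∀ k S T i j, i < p ^ k → j < p ^ k →
      ((M a b c (S * p ^ k + i) (T * p ^ k + j) : ZMod p))
        = (M a b c S T : ZMod p) * (M a b c i j : ZMod p) := by
  have h2 : 2 ≤ p := hp.two_le
  intro k
  induction k with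
  | zero =>
    intro S T i j hi hj
    simp only [pow_zero] at hi hj
    have hi0 : i = 0 := by omega
    have hj0 : j = 0 := by omega
    subst hi0; subst hj0
    rw [show S * p ^ 0 + 0 = S from by simp, show T * p ^ 0 + 0 = T from by simp,
        show M a b c 0 0 = 1 from by rw [M]]
    norm_num
  | succ k ihk =>
    intro S T i j hi hj
    have hpk : 0 < p ^ k := pow_pos (by omega) k
    have hdm : p ^ k * (i / p ^ k) + i % p ^ k = i := Nat.div_add_mod i (p ^ k)
    have hdm' : p ^ k * (j / p ^ k) + j % p ^ k = j := Nat.div_add_mod j (p ^ k)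
    have hu : i / p ^ k < p := by
      apply Nat.div_lt_of_lt_mul
      rw [← pow_succ]
      exact hi
    have hv : j / p ^ k < p := by
      apply Nat.div_lt_of_lt_mul
      rw [← pow_succ]
      exact hj
    have him : i % p ^ k < p ^ k := Nat.mod_lt _ hpk
    have hjm : j % p ^ k < p ^ k := Nat.mod_lt _ hpk
    have e1 : S * p ^ (k+1) + i = (S * p + i / p ^ k) * p ^ k + i % p ^ k := by
      rw [pow_succ]
      conv_lhs => rw [← hdm]
      ring
    have e2 : T * p ^ (k+1) + j = (T * p + j / p ^ k) * p ^ k + j % p ^ k := by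
      rw [pow_succ]
      conv_lhs => rw [← hdm']
      ring
    rw [e1, e2, ihk (S*p + i/p^k) (T*p + j/p^k) (i % p^k) (j % p^k) him hjm,
        M_key hp a b c hb (S*p + i/p^k + (T*p + j/p^k)) S T (i/p^k) (j/p^k) le_rfl hu hv]
    have e3 : ((M a b c i j : ZMod p))
        = (M a b c (i/p^k) (j/p^k) : ZMod p) * (M a b c (i % p^k) (j % p^k) : ZMod p) := by
      conv_lhs => rw [← hdm, ← hdm', Nat.mul_comm (p^k) (i / p^k), Nat.mul_comm (p^k) (j / p^k)]
      exact ihk (i/p^k) (j/p^k) (i % p^k) (j % p^k) him hjm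
    rw [e3]
    ring

/-- The set `S` of points `(i,j)` with `M[i,j] ≢ 0 (mod p)` is a discrete self-similar
fractal in the usual sense: `(s·p^k + i, t·p^k + j) ∈ S` iff `(s,t) ∈ S` and
`(i,j) ∈ S`. -/
theorem M_fractal_self_similar (p a b c : ℕ) (hp : p.Prime)
    (ha : ¬ p ∣ a) (hb : ¬ p ∣ b) (hc : ¬ p ∣ c)
    (S : Set (ℕ × ℕ)) (hS : S = {q : ℕ × ℕ | ¬ M a b c q.1 q.2 ≡ 0 [MOD p]}) :
    ∀ s t k i j : ℕ, s < p → t < p → i < p ^ k → j < p ^ k →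
      ((s * p ^ k + i, t * p ^ k + j) ∈ S ↔ ((s, t) ∈ S ∧ (i, j) ∈ S)) := by
  haveI : Fact p.Prime := ⟨hp⟩
  subst hS
  intro s t k i j hs ht hi hj
  simp only [Set.mem_setOf_eq]
  have hmod : ∀ x : ℕ, (x ≡ 0 [MOD p]) ↔ ((x : ZMod p) = 0) := by
    intro x
    rw [Nat.modEq_zero_iff_dvd]
    exact (ZMod.natCast_eq_zero_iff x p).symm
  rw [hmod, hmod, hmod, M_keyK hp a b c hb k s t i j hi hj, mul_eq_zero]
  tauto
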